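/- arXiv:2005.11898 — 3 statements merged into one kernel-verified Lean document; each statement's English description precedes it below -/
import Mathlib

section
/- Let A be a commutative Q-algebra and let a, b, c be nilpotent elements of A such that (1-a)*(1-b)*(1-c) = 1. Then the (finite) sums satisfy Σ_{m≥1} a^m/m + Σ_{m≥1} b^m/m + Σ_{m≥1} c^m/m = 0. -/
/-!
Write `L x = ∑ m ∈ Icc 1 n, x ^ m / m` and let `E` be the exponential series truncated after
degree `n`. In `ℚ[X]` the polynomial `G = E (L X) * (1 - X) - 1` has constant term `0`, and since
`E' = E - X ^ n / n!`, `(1 - X) * L' = 1 - X ^ n` and `X ∣ L X`, its derivative is divisible by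
`X ^ n`; hence `X ^ (n + 1) ∣ G`. Substituting `X ↦ x` with `x ^ n = 0` gives
`exp (L x) * (1 - x) = 1`. As `exp` is additive on commuting nilpotents,
`exp (L a + L b + L c) = ((1 - a) * (1 - b) * (1 - c))⁻¹ = 1`, and `exp` is injective on
nilpotents because `exp z - 1 = z * (1 + z * w)` with `1 + z * w` a unit.
-/

open Finset Polynomial

theorem Polynomial.X_pow_succ_dvd_of_X_pow_dvd_derivative {R : Type*} [CommRing R]
    [IsAddTorsionFree R] {p : R[X]} {n : ℕ} (h0 : p.coeff 0 = 0)
    (hd : X ^ n ∣ derivative p) : X ^ (n + 1) ∣ p := by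
  rw [X_pow_dvd_iff] at hd ⊢
  rintro (_ | d) hdn
  · exact h0
  · have := hd d (by omega)
    rwa [coeff_derivative, ← Nat.cast_succ, mul_comm, ← nsmul_eq_mul,
      nsmul_eq_zero_iff_right d.succ_ne_zero] at this

namespace PowerSeries

theorem derivative_trunc_succ_exp (R : Type*) [CommRing R] [Algebra ℚ R] (n : ℕ) :
    Polynomial.derivative (trunc (n + 1) (exp R)) = trunc n (exp R) := by
  rw [← trunc_derivative, derivative_exp]

theorem derivative_trunc_succ_exp_comp {R : Type*} [CommRing R] [Algebra ℚ R] (n : ℕ)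
    (p : R[X]) :
    Polynomial.derivative ((trunc (n + 1) (exp R)).comp p) =
      Polynomial.derivative p * (trunc n (exp R)).comp p := by
  rw [derivative_comp, derivative_trunc_succ_exp]

theorem aeval_trunc_exp {A : Type*} [Ring A] [Algebra ℚ A] {y : A} {n : ℕ} (hy : y ^ n = 0) :
    Polynomial.aeval y (trunc n (exp ℚ)) = IsNilpotent.exp y := by
  simp [aeval_def, eval₂_trunc_eq_sum_range, IsNilpotent.exp_eq_sum hy, coeff_exp,
    Algebra.smul_def]

end PowerSeries

noncomputable def negLogOneSubTrunc (n : ℕ) : ℚ[X] :=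
  ∑ m ∈ Icc 1 n, C (m : ℚ)⁻¹ * X ^ m

theorem X_dvd_negLogOneSubTrunc (n : ℕ) : X ∣ negLogOneSubTrunc n :=
  dvd_sum fun _ hm => (dvd_pow_self X (by grind)).mul_left _

theorem one_sub_X_mul_derivative_negLogOneSubTrunc (n : ℕ) :
    (1 - X) * derivative (negLogOneSubTrunc n) = 1 - X ^ n := by
  induction n with
  | zero => simp [negLogOneSubTrunc]
  | succ n ih =>
    rw [negLogOneSubTrunc, sum_Icc_succ_top (by omega), ← negLogOneSubTrunc, derivative_add,
      mul_add, ih, derivative_C_mul_X_pow, inv_mul_cancel₀ (by positivity), C_1,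
      one_mul, Nat.add_sub_cancel]
    ring

theorem aeval_negLogOneSubTrunc {A : Type*} [Semiring A] [Algebra ℚ A] (x : A) (n : ℕ) :
    aeval x (negLogOneSubTrunc n) = ∑ m ∈ Icc 1 n, (m : ℚ)⁻¹ • x ^ m := by
  simp [negLogOneSubTrunc, Algebra.smul_def]

theorem X_pow_succ_dvd_trunc_exp_comp_negLogOneSubTrunc_mul_one_sub_X_sub_one (n : ℕ) :
    X ^ (n + 1) ∣
      (PowerSeries.trunc (n + 1) (PowerSeries.exp ℚ)).comp (negLogOneSubTrunc n) * (1 - X)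
        - 1 := by
  set L := negLogOneSubTrunc n
  set E := (PowerSeries.trunc (n + 1) (PowerSeries.exp ℚ)).comp L
  set T := C (PowerSeries.coeff n (PowerSeries.exp ℚ)) * L ^ n
  have hE : (PowerSeries.trunc n (PowerSeries.exp ℚ)).comp L = E - T := by
    simp only [E, T, PowerSeries.trunc_succ, add_comp, monomial_comp]
    ring
  have hT : X ^ n ∣ T := (pow_dvd_pow_of_dvd (X_dvd_negLogOneSubTrunc n) n).mul_left _
  have hE0 : E.eval 0 = 1 := by
    have hL0 : L.eval 0 = 0 := by
      rw [← coeff_zero_eq_eval_zero, ← X_dvd_iff]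
      exact X_dvd_negLogOneSubTrunc n
    rw [eval_comp, hL0, ← coeff_zero_eq_eval_zero, PowerSeries.coeff_trunc]
    simp
  apply X_pow_succ_dvd_of_X_pow_dvd_derivative
  · simp [coeff_zero_eq_eval_zero, hE0]
  · have hG' : derivative (E * (1 - X) - 1) = -T - X ^ n * (E - T) := by
      simp only [derivative_sub, derivative_mul, derivative_one, derivative_X, E,
        PowerSeries.derivative_trunc_succ_exp_comp, hE]
      linear_combination (E - T) * one_sub_X_mul_derivative_negLogOneSubTrunc n
    rw [hG']
    exact dvd_sub hT.neg_right (dvd_mul_right _ _)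

section

variable {A : Type*} [Ring A] [Algebra ℚ A]

theorem aeval_negLogOneSubTrunc_pow_eq_zero {x : A} {n : ℕ} (hx : x ^ n = 0) :
    aeval x (negLogOneSubTrunc n) ^ n = 0 := by
  obtain ⟨q, hq⟩ := pow_dvd_pow_of_dvd (X_dvd_negLogOneSubTrunc n) n
  rw [← map_pow, hq, map_mul, map_pow, aeval_X, hx, zero_mul]

theorem IsNilpotent.exp_aeval_negLogOneSubTrunc_mul_one_sub {x : A} {n : ℕ} (hx : x ^ n = 0) :
    IsNilpotent.exp (aeval x (negLogOneSubTrunc n)) * (1 - x) = 1 := by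
  obtain ⟨q, hq⟩ := X_pow_succ_dvd_trunc_exp_comp_negLogOneSubTrunc_mul_one_sub_X_sub_one n
  have hL : aeval x (negLogOneSubTrunc n) ^ (n + 1) = 0 :=
    pow_eq_zero_of_le n.le_succ (aeval_negLogOneSubTrunc_pow_eq_zero hx)
  have := congrArg (aeval x) hq
  rw [map_sub, map_mul, aeval_comp, PowerSeries.aeval_trunc_exp hL, map_mul, map_pow, aeval_X,
    _root_.pow_succ, hx] at this
  simpa [sub_eq_zero] using this

theorem IsNilpotent.eq_zero_of_exp_eq_one {z : A} (hz : IsNilpotent z)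
    (h : IsNilpotent.exp z = 1) : z = 0 := by
  obtain ⟨k, hk⟩ := hz
  set w := ∑ i ∈ range k, ((i + 1 + 1).factorial : ℚ)⁻¹ • z ^ i
  have hexp : IsNilpotent.exp z = 1 + z * (1 + z * w) := by
    rw [IsNilpotent.exp_eq_sum (pow_eq_zero_of_le (k.le_add_right 2) hk), sum_range_succ',
      sum_range_succ']
    simp only [w, mul_add, mul_one, mul_sum, mul_smul_comm, ← pow_succ', zero_add,
      Nat.factorial_one, Nat.factorial_zero, Nat.cast_one, inv_one, pow_one, one_smul, pow_zero]
    abel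
  have hw : IsUnit (1 + z * w) :=
    IsNilpotent.isUnit_one_add <| Commute.isNilpotent_mul_right
      (Commute.sum_right _ _ _ fun i _ => ((Commute.refl z).pow_right i).smul_right _) ⟨k, hk⟩
  rw [h, left_eq_add] at hexp
  exact hw.mul_left_eq_zero.mp hexp

end

/-- For nilpotent `a, b, c` in a commutative `ℚ`-algebra with
`(1-a)(1-b)(1-c) = 1`, the (finite) logarithm series sum to zero. -/
theorem log_series_sum_eq_zero (A : Type*) [CommRing A] [Algebra ℚ A]
    (a b c : A) (na nb nc : ℕ)
    (ha : a ^ na = 0) (hb : b ^ nb = 0) (hc : c ^ nc = 0)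
    (h : (1 - a) * (1 - b) * (1 - c) = 1) :
    (∑ m ∈ Finset.Icc 1 na, ((m : ℚ)⁻¹) • a ^ m)
      + (∑ m ∈ Finset.Icc 1 nb, ((m : ℚ)⁻¹) • b ^ m)
      + (∑ m ∈ Finset.Icc 1 nc, ((m : ℚ)⁻¹) • c ^ m) = 0 := by
  simp only [← aeval_negLogOneSubTrunc]
  set La := aeval a (negLogOneSubTrunc na)
  set Lb := aeval b (negLogOneSubTrunc nb)
  set Lc := aeval c (negLogOneSubTrunc nc)
  have hLa : IsNilpotent La := ⟨na, aeval_negLogOneSubTrunc_pow_eq_zero ha⟩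
  have hLb : IsNilpotent Lb := ⟨nb, aeval_negLogOneSubTrunc_pow_eq_zero hb⟩
  have hLc : IsNilpotent Lc := ⟨nc, aeval_negLogOneSubTrunc_pow_eq_zero hc⟩
  have hLab : IsNilpotent (La + Lb) := (Commute.all _ _).isNilpotent_add hLa hLb
  refine IsNilpotent.eq_zero_of_exp_eq_one ((Commute.all _ _).isNilpotent_add hLab hLc) ?_
  rw [IsNilpotent.exp_add_of_commute (Commute.all _ _) hLab hLc,
    IsNilpotent.exp_add_of_commute (Commute.all _ _) hLa hLb]
  calc IsNilpotent.exp La * IsNilpotent.exp Lb * IsNilpotent.exp Lc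
      = IsNilpotent.exp La * (1 - a) * (IsNilpotent.exp Lb * (1 - b))
          * (IsNilpotent.exp Lc * (1 - c)) := by
        linear_combination (-(IsNilpotent.exp La * IsNilpotent.exp Lb * IsNilpotent.exp Lc)) * h
    _ = 1 := by
      rw [IsNilpotent.exp_aeval_negLogOneSubTrunc_mul_one_sub ha,
        IsNilpotent.exp_aeval_negLogOneSubTrunc_mul_one_sub hb,
        IsNilpotent.exp_aeval_negLogOneSubTrunc_mul_one_sub hc, mul_one, mul_one]
end

section
/- Let F be a field of characteristic p > 0, R = F[u,v,w,x,y,z], Δ3 = u*y - v*x, and I the ideal generated by the 2×2 minors of [[u,v,w],[x,y,z]]. Let q, q2 be powers of p with q ≥ m, where m = ζ*q2, and let φ = Σ_{i=0}^{ζ-1}(u*y)^i(v*x)^{ζ-1-i}. Then ((u*y)^ζ - (v*x)^ζ)^{q2} * ((v*x)^q - (u*y)^q) = -Δ3^{q2 + q} * φ^{q2}, and hence this element lies in I^{q+q2}. -/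
open MvPolynomial

/-- `Δ1 = vz - wy` with `u,v,w,x,y,z = X 0,...,X 5`. -/
noncomputable def Delta1 (F : Type*) [CommRing F] : MvPolynomial (Fin 6) F :=
  X 1 * X 5 - X 2 * X 4

/-- `Δ2 = wx - uz`. -/
noncomputable def Delta2 (F : Type*) [CommRing F] : MvPolynomial (Fin 6) F :=
  X 2 * X 3 - X 0 * X 5

/-- `Δ3 = uy - vx`. -/
noncomputable def Delta3 (F : Type*) [CommRing F] : MvPolynomial (Fin 6) F :=
  X 0 * X 4 - X 1 * X 3

/-- In characteristic `p > 0`, with `q = p^a`, `q2 = p^b`, `m = ζ·q2 ≤ q`, and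
`φ = Σ_{i=0}^{ζ-1} (uy)^i (vx)^{ζ-1-i}`, the key identity
`((uy)^ζ - (vx)^ζ)^{q2} · ((vx)^q - (uy)^q) = -Δ3^{q2+q} · φ^{q2}` holds, and
this element lies in `I^{q+q2}` where `I = (Δ1, Δ2, Δ3)`. -/
theorem charP_identity_uvxy (F : Type*) [Field F] (p : ℕ) [CharP F p] (hp : p.Prime)
    (a b ζ : ℕ) (hm : ζ * p ^ b ≤ p ^ a) :
    (((X 0 * X 4 : MvPolynomial (Fin 6) F) ^ ζ - (X 1 * X 3) ^ ζ) ^ p ^ b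
          * ((X 1 * X 3) ^ p ^ a - (X 0 * X 4) ^ p ^ a)
      = -((Delta3 F) ^ (p ^ b + p ^ a))
          * (∑ i ∈ Finset.range ζ, (X 0 * X 4) ^ i * (X 1 * X 3) ^ (ζ - 1 - i)) ^ p ^ b)
    ∧ (((X 0 * X 4 : MvPolynomial (Fin 6) F) ^ ζ - (X 1 * X 3) ^ ζ) ^ p ^ b
          * ((X 1 * X 3) ^ p ^ a - (X 0 * X 4) ^ p ^ a))
        ∈ (Ideal.span {Delta1 F, Delta2 F, Delta3 F}) ^ (p ^ a + p ^ b) := by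
  haveI : Fact p.Prime := ⟨hp⟩
  set A : MvPolynomial (Fin 6) F := X 0 * X 4
  set B : MvPolynomial (Fin 6) F := X 1 * X 3
  have hgeom : (∑ i ∈ Finset.range ζ, A ^ i * B ^ (ζ - 1 - i)) * (A - B) = A ^ ζ - B ^ ζ :=
    geom_sum₂_mul A B ζ
  have hfrob : (B - A) ^ p ^ a = B ^ p ^ a - A ^ p ^ a := sub_pow_char_pow B A a
  have hkey : (A ^ ζ - B ^ ζ) ^ p ^ b * (B ^ p ^ a - A ^ p ^ a)
      = -((Delta3 F) ^ (p ^ b + p ^ a))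
          * (∑ i ∈ Finset.range ζ, A ^ i * B ^ (ζ - 1 - i)) ^ p ^ b := by
    rw [← hgeom, ← hfrob]
    have hBA : B - A = -(Delta3 F) := by simp only [Delta3, A, B]; ring
    have hAB : A - B = Delta3 F := by simp only [Delta3, A, B]
    rw [hAB, hBA, neg_pow, neg_one_pow_char_pow (MvPolynomial (Fin 6) F) p]
    ring
  refine ⟨hkey, ?_⟩
  rw [hkey]
  have hD3 : Delta3 F ∈ Ideal.span {Delta1 F, Delta2 F, Delta3 F} :=
    Ideal.subset_span (by simp)
  have : (Delta3 F) ^ (p ^ a + p ^ b)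
      ∈ (Ideal.span {Delta1 F, Delta2 F, Delta3 F}) ^ (p ^ a + p ^ b) :=
    Ideal.pow_mem_pow hD3 _
  have h2 : -((Delta3 F) ^ (p ^ b + p ^ a))
      * (∑ i ∈ Finset.range ζ, A ^ i * B ^ (ζ - 1 - i)) ^ p ^ b
      = (Delta3 F) ^ (p ^ a + p ^ b)
        * (-(∑ i ∈ Finset.range ζ, A ^ i * B ^ (ζ - 1 - i)) ^ p ^ b) := by
    rw [Nat.add_comm (p^a)]; ring
  rw [h2]
  exact Ideal.mul_mem_right _ _ this
end

section
/- Let A be a commutative Q-algebra, t ≥ 2, and let a be an element of A with a^t = 0. Then the truncated logarithm L_t(a) = Σ_{m=1}^{t-1} a^m/m satisfies: for any element c with c^t = 0 and (1-a)(1-c) = 1, L_t(a) + L_t(c) ≡ 0 modulo the ideal generated by all products of t factors from {a, c}. -/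
/-- Hockey stick identity over `Ico`. -/
private lemma trunclog_hock (i : ℕ) : ∀ n : ℕ,
    ∑ k ∈ Finset.Ico i n, k.choose i = n.choose (i + 1) := by
  intro n
  induction n with
  | zero =>
    rw [Finset.Ico_eq_empty (by omega), Finset.sum_empty,
      Nat.choose_eq_zero_of_lt (by omega)]
  | succ n ih =>
    by_cases hin : i ≤ n
    · rw [Finset.sum_Ico_succ_top hin, ih, Nat.choose_succ_succ, add_comm]
    · rw [Finset.Ico_eq_empty (by omega), Finset.sum_empty,
        Nat.choose_eq_zero_of_lt (by omega)]

private lemma trunclog_alt_sum (k : ℕ) :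
    ∑ i ∈ Finset.range (k + 1), (-1 : ℚ) ^ (i + 1) * (((k + 1).choose (i + 1) : ℕ) : ℚ) = -1 := by
  have h := Int.alternating_sum_range_choose_of_ne (n := k + 1) (Nat.succ_ne_zero k)
  have h2 : ((∑ i ∈ Finset.range (k + 2), (-1 : ℤ) ^ i * ((k + 1).choose i : ℤ) : ℤ) : ℚ) = 0 := by
    rw [h]; norm_num
  push_cast at h2
  rw [Finset.sum_range_succ'] at h2
  simp only [pow_zero, Nat.choose_zero_right, Nat.cast_one, one_mul] at h2
  linarith [h2]

private lemma trunclog_ratid (k : ℕ) :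
    ∑ i ∈ Finset.range (k + 1), (-1 : ℚ) ^ (i + 1) * ((i : ℚ) + 1)⁻¹ * ((k.choose i : ℕ) : ℚ)
      = -(((k : ℚ) + 1)⁻¹) := by
  have key : ∀ i : ℕ, (-1 : ℚ) ^ (i + 1) * ((i : ℚ) + 1)⁻¹ * ((k.choose i : ℕ) : ℚ)
      = ((k : ℚ) + 1)⁻¹ * ((-1 : ℚ) ^ (i + 1) * (((k + 1).choose (i + 1) : ℕ) : ℚ)) := by
    intro i
    have h := Nat.add_one_mul_choose_eq k i
    have h' : ((k : ℚ) + 1) * ((k.choose i : ℕ) : ℚ)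
        = (((k + 1).choose (i + 1) : ℕ) : ℚ) * ((i : ℚ) + 1) := by
      exact_mod_cast congrArg (fun z : ℕ => (z : ℚ)) h
    have hi : ((i : ℚ) + 1) ≠ 0 := by positivity
    have hk : ((k : ℚ) + 1) ≠ 0 := by positivity
    field_simp
    linear_combination h'
  rw [Finset.sum_congr rfl fun i _ => key i, ← Finset.mul_sum, trunclog_alt_sum]
  ring

private lemma trunclog_neg_one_pow_smul {A : Type*} [CommRing A] [Algebra ℚ A]
    (n : ℕ) (q : ℚ) (x : A) : (-1 : A) ^ n * (q • x) = ((-1 : ℚ) ^ n * q) • x := by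
  rw [mul_smul, Algebra.smul_def ((-1 : ℚ) ^ n) (q • x), map_pow, map_neg, map_one]

/-- Truncated logarithms: if `a^t = 0 = c^t` and `(1-a)(1-c) = 1` in a commutative
`ℚ`-algebra, then `L_t(a) + L_t(c) = Σ_{m=1}^{t-1} a^m/m + Σ_{m=1}^{t-1} c^m/m`
lies in the `t`-th power of the ideal generated by `a` and `c`. -/
theorem truncated_log_sum_mem (A : Type*) [CommRing A] [Algebra ℚ A]
    (t : ℕ) (ht : 2 ≤ t) (a c : A) (ha : a ^ t = 0) (hc : c ^ t = 0)
    (h : (1 - a) * (1 - c) = 1) :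
    (∑ m ∈ Finset.Icc 1 (t - 1), ((m : ℚ)⁻¹) • a ^ m)
      + (∑ m ∈ Finset.Icc 1 (t - 1), ((m : ℚ)⁻¹) • c ^ m)
      ∈ (Ideal.span {a, c}) ^ t := by
  set S : A := ∑ k ∈ Finset.range t, a ^ k with hS
  have hpow : ∀ m, t ≤ m → a ^ m = 0 := by
    intro m hm
    rw [show m = t + (m - t) by omega, pow_add, ha, zero_mul]
  have h1 : (1 - a) * S = 1 := by
    have hg := geom_sum_mul a t
    rw [← hS] at hg
    linear_combination -hg - ha
  have h2 : a * S = S - 1 := by linear_combination -h1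
  have h3 : c = -(a * S) := by
    linear_combination (-S) * h + (1 - c) * h1 + h2
  have h4 : ∀ k : ℕ, a ^ (k + 1) * S = ∑ n ∈ Finset.Ico k (t - 1), a ^ (n + 1) := by
    intro k
    rw [hS, Finset.mul_sum]
    rw [Finset.sum_congr rfl (fun j _ => by rw [← pow_add] :
      ∀ j ∈ Finset.range t, a ^ (k + 1) * a ^ j = a ^ (k + 1 + j))]
    rw [Finset.range_eq_Ico,
      ← Finset.sum_Ico_consecutive _ (Nat.zero_le (t - 1 - k)) (by omega : t - 1 - k ≤ t)]
    have e2 : ∑ j ∈ Finset.Ico (t - 1 - k) t, a ^ (k + 1 + j) = 0 :=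
      Finset.sum_eq_zero fun j hj => hpow _ (by rw [Finset.mem_Ico] at hj; omega)
    rw [e2, add_zero, Finset.sum_Ico_eq_sum_range, Finset.sum_Ico_eq_sum_range]
    apply Finset.sum_congr (by simp)
    intro j _
    congr 1
    omega
  have h5 : ∀ i : ℕ, a ^ (i + 1) * S ^ (i + 1)
      = ∑ k ∈ Finset.Ico i (t - 1), ((k.choose i : ℕ) : ℚ) • a ^ (k + 1) := by
    intro i
    induction i with
    | zero =>
      simpa using h4 0
    | succ i ih =>
      rw [show a ^ (i + 1 + 1) * S ^ (i + 1 + 1) = a ^ (i + 1) * S ^ (i + 1) * (a * S) by ring,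
        ih, Finset.sum_mul]
      rw [Finset.sum_congr rfl (fun k _ => by
        rw [smul_mul_assoc, show a ^ (k + 1) * (a * S) = a ^ (k + 1 + 1) * S by ring, h4 (k + 1),
          Finset.smul_sum] :
        ∀ k ∈ Finset.Ico i (t - 1), ((k.choose i : ℕ) : ℚ) • a ^ (k + 1) * (a * S)
          = ∑ n ∈ Finset.Ico (k + 1) (t - 1), ((k.choose i : ℕ) : ℚ) • a ^ (n + 1))]
      have swap : ∑ k ∈ Finset.Ico i (t - 1), ∑ n ∈ Finset.Ico (k + 1) (t - 1),
            ((k.choose i : ℕ) : ℚ) • a ^ (n + 1)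
          = ∑ n ∈ Finset.Ico (i + 1) (t - 1), ∑ k ∈ Finset.Ico i n,
            ((k.choose i : ℕ) : ℚ) • a ^ (n + 1) :=
        Finset.sum_comm' (by intro x y; simp only [Finset.mem_Ico]; omega)
      rw [swap]
      refine Finset.sum_congr rfl fun n hn => ?_
      rw [← Finset.sum_smul]
      congr 1
      exact_mod_cast congrArg (fun z : ℕ => (z : ℚ)) (trunclog_hock i n)
  have hIcc : Finset.Icc 1 (t - 1) = Finset.Ico 1 t := by
    rw [← Finset.Ico_add_one_right_eq_Icc, show t - 1 + 1 = t from by omega]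
  have hX : ∀ x : A, ∑ m ∈ Finset.Icc 1 (t - 1), ((m : ℚ))⁻¹ • x ^ m
      = ∑ k ∈ Finset.range (t - 1), (((k : ℚ) + 1))⁻¹ • x ^ (k + 1) := by
    intro x
    rw [hIcc, Finset.sum_Ico_eq_sum_range]
    refine Finset.sum_congr rfl fun k _ => ?_
    rw [add_comm 1 k]
    push_cast
    ring_nf
  have hc' : ∀ k : ℕ, ((k : ℚ) + 1)⁻¹ • c ^ (k + 1)
      = ∑ n ∈ Finset.Ico k (t - 1),
          ((-1 : ℚ) ^ (k + 1) * ((k : ℚ) + 1)⁻¹ * ((n.choose k : ℕ) : ℚ)) • a ^ (n + 1) := by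
    intro k
    rw [h3, neg_pow, mul_pow, h5 k, Finset.mul_sum, Finset.smul_sum]
    refine Finset.sum_congr rfl fun n _ => ?_
    rw [trunclog_neg_one_pow_smul, smul_smul]
    congr 1
    ring
  have hY : ∑ k ∈ Finset.range (t - 1), ((k : ℚ) + 1)⁻¹ • c ^ (k + 1)
      = ∑ n ∈ Finset.range (t - 1), (-(((n : ℚ) + 1)⁻¹)) • a ^ (n + 1) := by
    rw [Finset.sum_congr rfl fun k _ => hc' k]
    have swap : ∑ k ∈ Finset.range (t - 1), ∑ n ∈ Finset.Ico k (t - 1),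
          ((-1 : ℚ) ^ (k + 1) * ((k : ℚ) + 1)⁻¹ * ((n.choose k : ℕ) : ℚ)) • a ^ (n + 1)
        = ∑ n ∈ Finset.range (t - 1), ∑ k ∈ Finset.range (n + 1),
          ((-1 : ℚ) ^ (k + 1) * ((k : ℚ) + 1)⁻¹ * ((n.choose k : ℕ) : ℚ)) • a ^ (n + 1) :=
      Finset.sum_comm' (by intro x y; simp only [Finset.mem_Ico, Finset.mem_range]; omega)
    rw [swap]
    refine Finset.sum_congr rfl fun n hn => ?_
    rw [← Finset.sum_smul]
    congr 1
    exact trunclog_ratid n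
  have hz : (∑ m ∈ Finset.Icc 1 (t - 1), ((m : ℚ)⁻¹) • a ^ m)
      + (∑ m ∈ Finset.Icc 1 (t - 1), ((m : ℚ)⁻¹) • c ^ m) = 0 := by
    rw [hX a, hX c, hY, ← Finset.sum_add_distrib]
    apply Finset.sum_eq_zero
    intro k _
    rw [← add_smul, add_neg_cancel, zero_smul]
  rw [hz]
  exact zero_mem _
end
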